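/- Let g be a Lie algebra over a field K and let r ∈ g ⊗ g be antisymmetric. Define a bilinear bracket on the dual space g* by [ξ, η]_r(x) := (ξ ⊗ η)(δ_r(x)), where (ξ⊗η)(a⊗b) := ξ(a)η(b) and δ_r(x) = ⁅x, r⁆. Then [·,·]_r satisfies the Jacobi identity [ξ, [η, ζ]_r]_r + [η, [ζ, ξ]_r]_r + [ζ, [ξ, η]_r]_r = 0 for all ξ, η, ζ ∈ g* if and only if ⟦r, r⟧ is g-invariant, i.e. ⁅x, ⟦r, r⟧⁆ = 0 in g⊗g⊗g for every x ∈ g (the modified classical Yang–Baxter equation). Equivalently, the map δ_r is a cocommutator (its dual is a Lie bracket on g*) precisely when r solves the mCYBE. -/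

import Mathlib

open TensorProduct

/-- The Lie bracket of `g`, as a linear map `g ⊗ g → g`. -/
noncomputable def lieBracketTensor (K : Type*) [Field K] (L : Type*) [LieRing L]
    [LieAlgebra K L] : L ⊗[K] L →ₗ[K] L :=
  TensorProduct.lift (LieAlgebra.ad K L : L →ₗ[K] L →ₗ[K] L)

/-- The linear map `(g⊗g) ⊗ (g⊗g) → g⊗g⊗g` determined on pure tensors by
`(a⊗b)⊗(c⊗d) ↦ ⁅a,c⁆⊗b⊗d + a⊗⁅b,c⁆⊗d + a⊗c⊗⁅b,d⁆`; applied to `r ⊗ r` it yields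
`⟦r,r⟧ = [r₁₂,r₁₃] + [r₁₂,r₂₃] + [r₁₃,r₂₃]`. -/
noncomputable def ybMap (K : Type*) [Field K] (L : Type*) [LieRing L] [LieAlgebra K L] :
    (L ⊗[K] L) ⊗[K] (L ⊗[K] L) →ₗ[K] L ⊗[K] (L ⊗[K] L) :=
  (TensorProduct.map (lieBracketTensor K L) (LinearMap.id : L ⊗[K] L →ₗ[K] L ⊗[K] L)).comp
      (TensorProduct.tensorTensorTensorComm K L L L L).toLinearMap
  + (TensorProduct.map (LinearMap.id : L →ₗ[K] L)
        ((TensorProduct.map (lieBracketTensor K L) (LinearMap.id : L →ₗ[K] L)).comp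
          (TensorProduct.assoc K L L L).symm.toLinearMap)).comp
      (TensorProduct.assoc K L L (L ⊗[K] L)).toLinearMap
  + (TensorProduct.map (LinearMap.id : L →ₗ[K] L)
        (TensorProduct.map (LinearMap.id : L →ₗ[K] L) (lieBracketTensor K L))).comp
      ((TensorProduct.assoc K L L (L ⊗[K] L)).toLinearMap.comp
        (TensorProduct.tensorTensorTensorComm K L L L L).toLinearMap)

/-- For `r ∈ g ⊗ g`, the linear map `δ_r : g → g ⊗ g`, `δ_r(x) = ⁅x, r⁆`. -/
noncomputable def deltaR {K : Type*} [Field K] {L : Type*} [LieRing L] [LieAlgebra K L]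
    (r : L ⊗[K] L) : L →ₗ[K] L ⊗[K] L where
  toFun x := ⁅x, r⁆
  map_add' x y := add_lie x y r
  map_smul' t x := smul_lie t x r

/-- The bracket on `g*` induced by `r ∈ g ⊗ g`: `[ξ, η]_r(x) = (ξ ⊗ η)(δ_r(x))`. -/
noncomputable def rBracket {K : Type*} [Field K] {L : Type*} [LieRing L] [LieAlgebra K L]
    (r : L ⊗[K] L) (ξ η : Module.Dual K L) : Module.Dual K L :=
  (TensorProduct.dualDistrib K L L (ξ ⊗ₜ[K] η)).comp (deltaR r)

/-!
Evaluated at `x`, the Jacobiator of `[·,·]_r` is `ξ ⊗ η ⊗ ζ` applied to the cyclic sum of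
`W = (id ⊗ δ_r)(δ_r x)`, and such product functionals separate the points of `g ⊗ g ⊗ g`;
so it suffices to show that this cyclic sum is `⁅x, ⟦r,r⟧⁆`. Since `⟦·,·⟧` is `g`-equivariant,
`⁅x, ⟦r,r⟧⁆ = ⟦t,r⟧ + ⟦r,t⟧` with `t = δ_r x`, which is antisymmetric like `r`. On the other
side `W = [t₁₂, r₂₃] + [t₁₃, r₂₃]`, and each cyclic shift of these two terms is one of the
remaining four terms of `⟦t,r⟧ + ⟦r,t⟧` once `t` or `r` is flipped.
-/

section TripleTensor

variable {R M N P : Type*} [CommSemiring R] [AddCommMonoid M] [Module R M] [AddCommMonoid N]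
  [Module R N] [AddCommMonoid P] [Module R P]

variable (R M) in
noncomputable def tensorCycle : M ⊗[R] (M ⊗[R] M) →ₗ[R] M ⊗[R] (M ⊗[R] M) :=
  (TensorProduct.comm R (M ⊗[R] M) M).toLinearMap ∘ₗ
    (TensorProduct.assoc R M M M).symm.toLinearMap

@[simp]
lemma tensorCycle_tmul (u v w : M) : tensorCycle R M (u ⊗ₜ (v ⊗ₜ w)) = w ⊗ₜ (u ⊗ₜ v) :=
  rfl

variable (R M) in
noncomputable def cyclicSum : M ⊗[R] (M ⊗[R] M) →ₗ[R] M ⊗[R] (M ⊗[R] M) :=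
  LinearMap.id + tensorCycle R M + tensorCycle R M ∘ₗ tensorCycle R M

noncomputable def tripleDual (ξ : Module.Dual R M) (η : Module.Dual R N) (ζ : Module.Dual R P) :
    Module.Dual R (M ⊗[R] (N ⊗[R] P)) :=
  dualDistrib R M (N ⊗[R] P) (ξ ⊗ₜ dualDistrib R N P (η ⊗ₜ ζ))

@[simp]
lemma tripleDual_tmul (ξ : Module.Dual R M) (η : Module.Dual R N) (ζ : Module.Dual R P)
    (u : M) (v : N) (w : P) :
    tripleDual ξ η ζ (u ⊗ₜ (v ⊗ₜ w)) = ξ u * (η v * ζ w) := by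
  simp [tripleDual]

lemma dualDistrib_tmul_comp {N' : Type*} [AddCommMonoid N'] [Module R N']
    (ξ : Module.Dual R M) (φ : Module.Dual R N') (f : N →ₗ[R] N') :
    dualDistrib R M N (ξ ⊗ₜ (φ ∘ₗ f)) = dualDistrib R M N' (ξ ⊗ₜ φ) ∘ₗ map LinearMap.id f := by
  ext u v
  simp

lemma tripleDual_tensorCycle (ξ η ζ : Module.Dual R M) (t : M ⊗[R] (M ⊗[R] M)) :
    tripleDual ξ η ζ (tensorCycle R M t) = tripleDual η ζ ξ t := by
  have : tripleDual ξ η ζ ∘ₗ tensorCycle R M = tripleDual η ζ ξ :=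
    ext_threefold' fun u v w => by
      simp only [LinearMap.comp_apply, tensorCycle_tmul, tripleDual_tmul]
      ring
  exact LinearMap.congr_fun this t

lemma tripleDual_cyclicSum (ξ η ζ : Module.Dual R M) (t : M ⊗[R] (M ⊗[R] M)) :
    tripleDual ξ η ζ (cyclicSum R M t) =
      tripleDual ξ η ζ t + tripleDual η ζ ξ t + tripleDual ζ ξ η t := by
  simp only [cyclicSum, LinearMap.add_apply, LinearMap.id_apply, LinearMap.comp_apply, map_add,
    tripleDual_tensorCycle]

lemma eq_zero_of_forall_tripleDual_eq_zero [Module.Free R M] [Module.Free R N] [Module.Free R P]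
    {t : M ⊗[R] (N ⊗[R] P)} (h : ∀ ξ η ζ, tripleDual ξ η ζ t = 0) :
    t = 0 := by
  let b := Module.Free.chooseBasis R M
  let c := Module.Free.chooseBasis R N
  let d := Module.Free.chooseBasis R P
  have coord_eq (i j k) : (b.tensorProduct (c.tensorProduct d)).coord (i, (j, k)) =
      tripleDual (b.coord i) (c.coord j) (d.coord k) :=
    ext_threefold' fun u v w => by simp [Module.Basis.tensorProduct_repr_tmul_apply, mul_comm]
  refine (b.tensorProduct (c.tensorProduct d)).forall_coord_eq_zero_iff.mp fun ⟨i, j, k⟩ => ?_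
  rw [coord_eq]
  exact h _ _ _

end TripleTensor

section ClassicalYangBaxter

variable {R L : Type*} [CommRing R] [LieRing L] [LieAlgebra R L]

lemma TensorProduct.comm_lie {M N : Type*} [AddCommGroup M] [Module R M] [LieRingModule L M]
    [LieModule R L M] [AddCommGroup N] [Module R N] [LieRingModule L N] [LieModule R L N]
    (x : L) (t : M ⊗[R] N) :
    TensorProduct.comm R M N ⁅x, t⁆ = ⁅x, TensorProduct.comm R M N t⁆ := by
  induction t using TensorProduct.induction_on with
  | zero => simp
  | tmul m n => simp [LieModule.lie_tmul_right, add_comm]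
  | add t₁ t₂ h₁ h₂ => simp only [lie_add, map_add, h₁, h₂]

variable (R L)

/-- `ybMap₁₂₁₃ (t ⊗ r) = [t₁₂, r₁₃]`; the other two components are named the same way. -/
noncomputable def ybMap₁₂₁₃ : (L ⊗[R] L) ⊗[R] (L ⊗[R] L) →ₗ[R] L ⊗[R] (L ⊗[R] L) :=
  map (lift (LieAlgebra.ad R L : L →ₗ[R] L →ₗ[R] L)) LinearMap.id ∘ₗ
    (tensorTensorTensorComm R L L L L).toLinearMap

noncomputable def ybMap₁₂₂₃ : (L ⊗[R] L) ⊗[R] (L ⊗[R] L) →ₗ[R] L ⊗[R] (L ⊗[R] L) :=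
  map LinearMap.id
      (map (lift (LieAlgebra.ad R L : L →ₗ[R] L →ₗ[R] L)) LinearMap.id ∘ₗ
        (TensorProduct.assoc R L L L).symm.toLinearMap) ∘ₗ
    (TensorProduct.assoc R L L (L ⊗[R] L)).toLinearMap

noncomputable def ybMap₁₃₂₃ : (L ⊗[R] L) ⊗[R] (L ⊗[R] L) →ₗ[R] L ⊗[R] (L ⊗[R] L) :=
  map LinearMap.id (map LinearMap.id (lift (LieAlgebra.ad R L : L →ₗ[R] L →ₗ[R] L))) ∘ₗ
    (TensorProduct.assoc R L L (L ⊗[R] L)).toLinearMap ∘ₗ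
      (tensorTensorTensorComm R L L L L).toLinearMap

variable {R L}

@[simp]
lemma ybMap₁₂₁₃_tmul (a b c d : L) :
    ybMap₁₂₁₃ R L ((a ⊗ₜ b) ⊗ₜ (c ⊗ₜ d)) = ⁅a, c⁆ ⊗ₜ (b ⊗ₜ d) := by
  simp [ybMap₁₂₁₃]

@[simp]
lemma ybMap₁₂₂₃_tmul (a b c d : L) :
    ybMap₁₂₂₃ R L ((a ⊗ₜ b) ⊗ₜ (c ⊗ₜ d)) = a ⊗ₜ (⁅b, c⁆ ⊗ₜ d) := by
  simp [ybMap₁₂₂₃]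

@[simp]
lemma ybMap₁₃₂₃_tmul (a b c d : L) :
    ybMap₁₃₂₃ R L ((a ⊗ₜ b) ⊗ₜ (c ⊗ₜ d)) = a ⊗ₜ (c ⊗ₜ ⁅b, d⁆) := by
  simp [ybMap₁₃₂₃]

lemma tensorCycle_ybMap₁₂₂₃ (t r : L ⊗[R] L) :
    tensorCycle R L (ybMap₁₂₂₃ R L (t ⊗ₜ r)) =
      -ybMap₁₃₂₃ R L (TensorProduct.comm R L L r ⊗ₜ t) := by
  induction t using TensorProduct.induction_on with
  | zero => simp
  | add t₁ t₂ h₁ h₂ => simp only [add_tmul, tmul_add, map_add, h₁, h₂, neg_add]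
  | tmul u v =>
    induction r using TensorProduct.induction_on with
    | zero => simp
    | add r₁ r₂ h₁ h₂ => simp only [add_tmul, tmul_add, map_add, h₁, h₂, neg_add]
    | tmul a b =>
      simp only [tensorCycle_tmul, ybMap₁₂₂₃_tmul, ybMap₁₃₂₃_tmul, comm_tmul]
      rw [← lie_skew a v, tmul_neg, tmul_neg, neg_neg]

lemma tensorCycle_ybMap₁₃₂₃ (t r : L ⊗[R] L) :
    tensorCycle R L (ybMap₁₃₂₃ R L (t ⊗ₜ r)) =
      ybMap₁₂₁₃ R L (TensorProduct.comm R L L t ⊗ₜ TensorProduct.comm R L L r) := by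
  induction t using TensorProduct.induction_on with
  | zero => simp
  | add t₁ t₂ h₁ h₂ => simp only [add_tmul, map_add, h₁, h₂]
  | tmul u v =>
    induction r using TensorProduct.induction_on with
    | zero => simp
    | add r₁ r₂ h₁ h₂ => simp only [tmul_add, map_add, h₁, h₂]
    | tmul a b => simp

lemma tensorCycle_tensorCycle_ybMap₁₂₂₃ (t r : L ⊗[R] L) :
    tensorCycle R L (tensorCycle R L (ybMap₁₂₂₃ R L (t ⊗ₜ r))) =
      -ybMap₁₂₁₃ R L (r ⊗ₜ TensorProduct.comm R L L t) := by
  induction t using TensorProduct.induction_on with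
  | zero => simp
  | add t₁ t₂ h₁ h₂ => simp only [add_tmul, tmul_add, map_add, h₁, h₂, neg_add]
  | tmul u v =>
    induction r using TensorProduct.induction_on with
    | zero => simp
    | add r₁ r₂ h₁ h₂ => simp only [add_tmul, tmul_add, map_add, h₁, h₂, neg_add]
    | tmul a b =>
      simp only [tensorCycle_tmul, ybMap₁₂₁₃_tmul, ybMap₁₂₂₃_tmul, comm_tmul]
      rw [← lie_skew a v, neg_tmul, neg_neg]

lemma tensorCycle_tensorCycle_ybMap₁₃₂₃ (t r : L ⊗[R] L) :
    tensorCycle R L (tensorCycle R L (ybMap₁₃₂₃ R L (t ⊗ₜ r))) =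
      -ybMap₁₂₂₃ R L (r ⊗ₜ TensorProduct.comm R L L t) := by
  induction t using TensorProduct.induction_on with
  | zero => simp
  | add t₁ t₂ h₁ h₂ => simp only [add_tmul, tmul_add, map_add, h₁, h₂, neg_add]
  | tmul u v =>
    induction r using TensorProduct.induction_on with
    | zero => simp
    | add r₁ r₂ h₁ h₂ => simp only [add_tmul, tmul_add, map_add, h₁, h₂, neg_add]
    | tmul a b =>
      simp only [tensorCycle_tmul, ybMap₁₂₂₃_tmul, ybMap₁₃₂₃_tmul, comm_tmul]
      rw [← lie_skew b v, neg_tmul, tmul_neg, neg_neg]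

lemma cyclicSum_ybMap₁₂₂₃_add_ybMap₁₃₂₃ {t r : L ⊗[R] L} (ht : TensorProduct.comm R L L t = -t)
    (hr : TensorProduct.comm R L L r = -r) :
    cyclicSum R L (ybMap₁₂₂₃ R L (t ⊗ₜ r) + ybMap₁₃₂₃ R L (t ⊗ₜ r)) =
      (ybMap₁₂₁₃ R L + ybMap₁₂₂₃ R L + ybMap₁₃₂₃ R L) (t ⊗ₜ r + r ⊗ₜ t) := by
  have cycle : tensorCycle R L (ybMap₁₂₂₃ R L (t ⊗ₜ r) + ybMap₁₃₂₃ R L (t ⊗ₜ r)) =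
      ybMap₁₃₂₃ R L (r ⊗ₜ t) + ybMap₁₂₁₃ R L (t ⊗ₜ r) := by
    rw [map_add, tensorCycle_ybMap₁₂₂₃, tensorCycle_ybMap₁₃₂₃, ht, hr, neg_tmul, map_neg,
      neg_neg, neg_tmul, tmul_neg, map_neg, map_neg, neg_neg]
  have cycle_cycle :
      tensorCycle R L (tensorCycle R L (ybMap₁₂₂₃ R L (t ⊗ₜ r) + ybMap₁₃₂₃ R L (t ⊗ₜ r))) =
        ybMap₁₂₁₃ R L (r ⊗ₜ t) + ybMap₁₂₂₃ R L (r ⊗ₜ t) := by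
    rw [map_add, map_add, tensorCycle_tensorCycle_ybMap₁₂₂₃, tensorCycle_tensorCycle_ybMap₁₃₂₃,
      ht, tmul_neg, map_neg, map_neg, neg_neg, neg_neg]
  rw [cyclicSum, LinearMap.add_apply, LinearMap.add_apply, LinearMap.id_apply,
    LinearMap.comp_apply, cycle_cycle, cycle]
  simp only [map_add, LinearMap.add_apply]
  abel

end ClassicalYangBaxter

section RBracket

variable {K L : Type*} [Field K] [LieRing L] [LieAlgebra K L]

lemma ybMap_eq_add : ybMap K L = ybMap₁₂₁₃ K L + ybMap₁₂₂₃ K L + ybMap₁₃₂₃ K L :=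
  rfl

lemma lie_ybMap (x : L) (T : (L ⊗[K] L) ⊗[K] (L ⊗[K] L)) :
    ⁅x, ybMap K L T⁆ = ybMap K L ⁅x, T⁆ := by
  have : LieModule.toEnd K L _ x ∘ₗ ybMap K L = ybMap K L ∘ₗ LieModule.toEnd K L _ x := by
    refine ext_fourfold' fun a b c d => ?_
    simp only [ybMap_eq_add, LinearMap.comp_apply, LieModule.toEnd_apply_apply,
      LieModule.lie_tmul_right, LinearMap.add_apply, ybMap₁₂₁₃_tmul, ybMap₁₂₂₃_tmul,
      ybMap₁₃₂₃_tmul, map_add, tmul_add, add_tmul, leibniz_lie x]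
    abel
  exact LinearMap.congr_fun this T

lemma map_id_deltaR (r t : L ⊗[K] L) :
    map LinearMap.id (deltaR r) t = ybMap₁₂₂₃ K L (t ⊗ₜ r) + ybMap₁₃₂₃ K L (t ⊗ₜ r) := by
  induction t using TensorProduct.induction_on with
  | zero => simp
  | add t₁ t₂ h₁ h₂ => simp only [map_add, h₁, h₂, add_tmul]; abel
  | tmul u v =>
    change u ⊗ₜ ⁅v, r⁆ = _
    induction r using TensorProduct.induction_on with
    | zero => simp
    | add r₁ r₂ h₁ h₂ =>
      rw [lie_add, tmul_add, h₁, h₂, tmul_add, map_add, map_add]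
      abel
    | tmul a b => simp [LieModule.lie_tmul_right, tmul_add]

lemma cyclicSum_map_id_deltaR {r : L ⊗[K] L} (hr : TensorProduct.comm K L L r = -r) (x : L) :
    cyclicSum K L (map LinearMap.id (deltaR r) (deltaR r x)) = ⁅x, ybMap K L (r ⊗ₜ r)⁆ := by
  have hδ : TensorProduct.comm K L L (deltaR r x) = -deltaR r x := by
    rw [deltaR, LinearMap.coe_mk, AddHom.coe_mk, TensorProduct.comm_lie, hr, lie_neg]
  rw [lie_ybMap, LieModule.lie_tmul_right, ybMap_eq_add, map_id_deltaR]
  exact cyclicSum_ybMap₁₂₂₃_add_ybMap₁₃₂₃ hδ hr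

lemma rBracket_rBracket_apply (r : L ⊗[K] L) (ξ η ζ : Module.Dual K L) (x : L) :
    rBracket r ξ (rBracket r η ζ) x =
      tripleDual ξ η ζ (map LinearMap.id (deltaR r) (deltaR r x)) := by
  rw [rBracket, rBracket, dualDistrib_tmul_comp]
  rfl

end RBracket

/-- The bracket `[·,·]_r` on `g*` satisfies the Jacobi identity if and only if
`⟦r, r⟧` is `g`-invariant, i.e. `r` solves the modified classical Yang–Baxter
equation; equivalently, `δ_r` is a cocommutator precisely when `r` solves the mCYBE. -/
theorem rBracket_jacobi_iff_mcybe
    {K : Type*} [Field K] {L : Type*} [LieRing L] [LieAlgebra K L]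
    (r : L ⊗[K] L) (hr : TensorProduct.comm K L L r = -r) :
    (∀ ξ η ζ : Module.Dual K L,
        rBracket r ξ (rBracket r η ζ) + rBracket r η (rBracket r ζ ξ)
          + rBracket r ζ (rBracket r ξ η) = 0)
      ↔ (∀ x : L, ⁅x, ybMap K L (r ⊗ₜ[K] r)⁆ = 0) := by
  have jacobiator_apply (ξ η ζ : Module.Dual K L) (x : L) :
      (rBracket r ξ (rBracket r η ζ) + rBracket r η (rBracket r ζ ξ)
        + rBracket r ζ (rBracket r ξ η)) x = tripleDual ξ η ζ ⁅x, ybMap K L (r ⊗ₜ r)⁆ := by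
    rw [← cyclicSum_map_id_deltaR hr x, tripleDual_cyclicSum]
    simp only [LinearMap.add_apply, rBracket_rBracket_apply]
  constructor
  · intro h x
    exact eq_zero_of_forall_tripleDual_eq_zero fun ξ η ζ => by
      rw [← jacobiator_apply, h, LinearMap.zero_apply]
  · intro h ξ η ζ
    ext x
    rw [jacobiator_apply, h, map_zero, LinearMap.zero_apply]
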